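/- For the Freund 4-manifold with coordinates (α₁,β₁,α₂,β₂), the Fisher information metric is diagonal with entries g₁₁=1/(α₁²+α₁α₂), g₂₂=α₂/(β₁²(α₁+α₂)), g₃₃=1/(α₂²+α₁α₂), g₄₄=α₁/(β₂²(α₁+α₂)). -/

import Mathlib

/-!
On each of the two wedges `0 < x < y` and `0 < y < x` the log-likelihood is, near any positive
parameter, a sum of terms `e k * log (p k) + c k * p k` with `e k ∈ {0, 1}`. Its Hessian is
therefore constant on each wedge and diagonal, with entries `-1/α₁², 0, 0, -1/β₂²` and
`0, -1/β₁², -1/α₂², 0` respectively. The Fisher metric is minus the mixture of these two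
matrices with the wedge probabilities `α₁/(α₁+α₂)` and `α₂/(α₁+α₂)`.
-/

open MeasureTheory Real

/-- The Freund bivariate mixture exponential density. -/
noncomputable def freund (a1 b1 a2 b2 : ℝ) (x y : ℝ) : ℝ :=
  if 0 < x ∧ x < y then a1 * b2 * Real.exp (-b2 * y - (a1 + a2 - b2) * x)
  else if 0 < y ∧ y < x then a2 * b1 * Real.exp (-b1 * x - (a1 + a2 - b1) * y)
  else 0

/-- Partial derivative in the `i`-th parameter. -/
noncomputable def pd (i : Fin 4) (F : (Fin 4 → ℝ) → ℝ) (p : Fin 4 → ℝ) : ℝ :=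
  deriv (fun t => F (Function.update p i t)) (p i)

/-- Log-likelihood as a function of the parameters `(α₁, β₁, α₂, β₂)`. -/
noncomputable def ll (x y : ℝ) (p : Fin 4 → ℝ) : ℝ :=
  Real.log (freund (p 0) (p 1) (p 2) (p 3) x y)

/-- Fisher information: expectation of minus the Hessian of the log-likelihood. -/
noncomputable def fisher (p : Fin 4 → ℝ) (i j : Fin 4) : ℝ :=
  -∫ x in Set.Ioi (0:ℝ), ∫ y in Set.Ioi (0:ℝ),
      pd i (pd j (ll x y)) p * freund (p 0) (p 1) (p 2) (p 3) x y

open Set Filter Topology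

lemma pd_congr {F G : (Fin 4 → ℝ) → ℝ} {p : Fin 4 → ℝ} (h : F =ᶠ[𝓝 p] G) (i : Fin 4) :
    pd i F p = pd i G p := by
  have hupdate : Tendsto (fun t => Function.update p i t) (𝓝 (p i)) (𝓝 p) := by
    simpa using ((continuous_const (y := p)).update i continuous_id).tendsto (p i)
  exact Filter.EventuallyEq.deriv_eq (hupdate.eventually h)

lemma pd_eventuallyEq {F G : (Fin 4 → ℝ) → ℝ} {p : Fin 4 → ℝ} (h : F =ᶠ[𝓝 p] G) (i : Fin 4) :
    pd i F =ᶠ[𝓝 p] pd i G :=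
  h.eventuallyEq_nhds.mono fun _ hq => pd_congr hq i

lemma pd_comp_apply (f : ℝ → ℝ) (i j : Fin 4) (q : Fin 4 → ℝ) :
    pd i (fun q => f (q j)) q = if j = i then deriv f (q i) else 0 := by
  unfold pd
  split_ifs with hji
  · subst hji; simp
  · simp [Function.update_of_ne hji]

lemma pd_sum_comp_apply (φ : Fin 4 → ℝ → ℝ) (i : Fin 4) (q : Fin 4 → ℝ) :
    pd i (fun q => ∑ k, φ k (q k)) q = deriv (φ i) (q i) := by
  unfold pd
  simp_rw [Fintype.sum_eq_add_sum_compl i, Function.update_self]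
  have hrest : ∀ t, ∑ k ∈ {i}ᶜ, φ k (Function.update q i t k) = ∑ k ∈ {i}ᶜ, φ k (q k) :=
    fun t => Finset.sum_congr rfl fun k hk =>
      by rw [Function.update_of_ne (by simpa using hk)]
  simp_rw [hrest, deriv_add_const]

lemma pd_pd_sum_comp_apply (φ : Fin 4 → ℝ → ℝ) (i j : Fin 4) (p : Fin 4 → ℝ) :
    pd i (pd j fun q => ∑ k, φ k (q k)) p =
      Matrix.diagonal (fun k => deriv (deriv (φ k)) (p k)) i j := by
  simp_rw [funext (pd_sum_comp_apply φ j), pd_comp_apply, Matrix.diagonal_apply, eq_comm (a := j)]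
  split_ifs with h
  · subst h; rfl
  · rfl

lemma deriv_deriv_log_add_mul (e c : ℝ) {a : ℝ} (ha : a ≠ 0) :
    deriv (deriv fun t => e * log t + c * t) a = -e / a ^ 2 := by
  have hderiv : (deriv fun t => e * log t + c * t) =ᶠ[𝓝 a] fun t => e * t⁻¹ + c := by
    filter_upwards [eventually_ne_nhds ha] with t ht
    have h : HasDerivAt (fun t => e * log t + c * t) (e * t⁻¹ + c * 1) t :=
      ((hasDerivAt_log ht).const_mul e).add ((hasDerivAt_id' t).const_mul c)
    simpa using h.deriv
  rw [hderiv.deriv_eq, (((hasDerivAt_inv ha).const_mul e).add_const c).deriv]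
  field_simp

noncomputable def logAffine (e c : Fin 4 → ℝ) (q : Fin 4 → ℝ) : ℝ :=
  ∑ k, (e k * log (q k) + c k * q k)

lemma pd_pd_logAffine (e c : Fin 4 → ℝ) {p : Fin 4 → ℝ} (hp : ∀ k, p k ≠ 0) (i j : Fin 4) :
    pd i (pd j (logAffine e c)) p = Matrix.diagonal (fun k => -e k / p k ^ 2) i j := by
  unfold logAffine
  rw [pd_pd_sum_comp_apply (fun k t => e k * log t + c k * t)]
  simp_rw [deriv_deriv_log_add_mul _ _ (hp _)]

lemma freund_of_lt {a1 b1 a2 b2 x y : ℝ} (hx : 0 < x) (hxy : x < y) :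
    freund a1 b1 a2 b2 x y = a1 * b2 * exp (-b2 * y - (a1 + a2 - b2) * x) :=
  if_pos ⟨hx, hxy⟩

lemma freund_of_gt {a1 b1 a2 b2 x y : ℝ} (hy : 0 < y) (hyx : y < x) :
    freund a1 b1 a2 b2 x y = a2 * b1 * exp (-b1 * x - (a1 + a2 - b1) * y) := by
  rw [freund, if_neg fun h => lt_asymm h.2 hyx, if_pos ⟨hy, hyx⟩]

lemma eventually_pos_apply {p : Fin 4 → ℝ} {k : Fin 4} (hk : 0 < p k) : ∀ᶠ q in 𝓝 p, 0 < q k :=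
  ((continuous_apply k).tendsto p).eventually_const_lt hk

lemma ll_eventuallyEq_of_lt {x y : ℝ} (hx : 0 < x) (hxy : x < y) {p : Fin 4 → ℝ}
    (hp0 : 0 < p 0) (hp3 : 0 < p 3) :
    ll x y =ᶠ[𝓝 p] logAffine ![1, 0, 0, 1] ![-x, 0, -x, x - y] := by
  filter_upwards [eventually_pos_apply hp0, eventually_pos_apply hp3] with q hq0 hq3
  rw [ll, freund_of_lt hx hxy, log_mul (by positivity) (exp_ne_zero _),
    log_mul hq0.ne' hq3.ne', log_exp, logAffine, Fin.sum_univ_four]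
  simp only [Fin.isValue, neg_mul, Matrix.cons_val_zero, one_mul, Matrix.cons_val_one, zero_mul,
    add_zero, Matrix.cons_val, zero_add]
  ring

lemma ll_eventuallyEq_of_gt {x y : ℝ} (hy : 0 < y) (hyx : y < x) {p : Fin 4 → ℝ}
    (hp1 : 0 < p 1) (hp2 : 0 < p 2) :
    ll x y =ᶠ[𝓝 p] logAffine ![0, 1, 1, 0] ![-y, y - x, -y, 0] := by
  filter_upwards [eventually_pos_apply hp1, eventually_pos_apply hp2] with q hq1 hq2
  rw [ll, freund_of_gt hy hyx, log_mul (by positivity) (exp_ne_zero _),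
    log_mul hq2.ne' hq1.ne', log_exp, logAffine, Fin.sum_univ_four]
  simp only [Fin.isValue, neg_mul, Matrix.cons_val_zero, one_mul, Matrix.cons_val_one, zero_mul,
    add_zero, Matrix.cons_val, zero_add]
  ring

lemma pd_pd_ll_of_lt {x y : ℝ} (hx : 0 < x) (hxy : x < y) {p : Fin 4 → ℝ} (hp : ∀ k, 0 < p k)
    (i j : Fin 4) :
    pd i (pd j (ll x y)) p = Matrix.diagonal (fun k => -![1, 0, 0, 1] k / p k ^ 2) i j :=
  (pd_congr (pd_eventuallyEq (ll_eventuallyEq_of_lt hx hxy (hp 0) (hp 3)) j) i).trans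
    (pd_pd_logAffine _ _ (fun k => (hp k).ne') i j)

lemma pd_pd_ll_of_gt {x y : ℝ} (hy : 0 < y) (hyx : y < x) {p : Fin 4 → ℝ} (hp : ∀ k, 0 < p k)
    (i j : Fin 4) :
    pd i (pd j (ll x y)) p = Matrix.diagonal (fun k => -![0, 1, 1, 0] k / p k ^ 2) i j :=
  (pd_congr (pd_eventuallyEq (ll_eventuallyEq_of_gt hy hyx (hp 1) (hp 2)) j) i).trans
    (pd_pd_logAffine _ _ (fun k => (hp k).ne') i j)

lemma integral_exp_mul_Ioo {k : ℝ} (hk : k ≠ 0) {x : ℝ} (hx : 0 ≤ x) :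
    ∫ y in Ioo 0 x, exp (k * y) = (exp (k * x) - 1) / k := by
  rw [← integral_Ioc_eq_integral_Ioo, ← intervalIntegral.integral_of_le hx,
    intervalIntegral.integral_comp_mul_left exp hk, integral_exp]
  simp [div_eq_inv_mul]

lemma integral_mul_exp_neg_mul_Ioi {b : ℝ} (hb : 0 < b) :
    ∫ x in Ioi 0, x * exp (-b * x) = 1 / b ^ 2 := by
  have h := integral_rpow_mul_exp_neg_mul_Ioi two_pos hb
  norm_num [Gamma_two, neg_mul] at h ⊢
  exact h

-- Applied with `k = β₁ - (α₁ + α₂)`, which may vanish: this is why the inner integral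
-- is kept unevaluated until here.
lemma integral_exp_mul_integral_exp {b k : ℝ} (hb : 0 < b) (hkb : k < b) :
    ∫ x in Ioi 0, exp (-b * x) * ∫ y in Ioo 0 x, exp (k * y) = 1 / (b * (b - k)) := by
  rcases eq_or_ne k 0 with rfl | hk
  · have hinner : ∀ x ∈ Ioi (0 : ℝ),
        exp (-b * x) * ∫ y in Ioo 0 x, exp (0 * y) = x * exp (-b * x) := by
      intro x hx
      simp [(mem_Ioi.1 hx).le, mul_comm]
    rw [setIntegral_congr_fun measurableSet_Ioi hinner, integral_mul_exp_neg_mul_Ioi hb]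
    ring
  · have hsplit : ∀ x ∈ Ioi (0 : ℝ), exp (-b * x) * ∫ y in Ioo 0 x, exp (k * y) =
        k⁻¹ * exp ((k - b) * x) - k⁻¹ * exp (-b * x) := by
      intro x hx
      rw [integral_exp_mul_Ioo hk (mem_Ioi.1 hx).le, sub_mul, sub_eq_add_neg (k * x), exp_add]
      ring_nf
    have hneg : -b < 0 := neg_lt_zero.2 hb
    have hkneg : k - b < 0 := by linarith
    rw [setIntegral_congr_fun measurableSet_Ioi hsplit,
      integral_sub ((integrableOn_exp_mul_Ioi hkneg 0).const_mul _)
        ((integrableOn_exp_mul_Ioi hneg 0).const_mul _),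
      integral_const_mul, integral_const_mul, integral_exp_mul_Ioi hkneg,
      integral_exp_mul_Ioi hneg]
    simp only [mul_zero, exp_zero]
    have hbk : b - k ≠ 0 := by linarith
    have hkb' : k - b ≠ 0 := hkneg.ne
    field_simp
    ring

lemma integral_mul_freund_of_pos {a1 b1 a2 b2 : ℝ} (hb2 : 0 < b2) {g : ℝ → ℝ} {c d x : ℝ}
    (hx : 0 < x) (hc : ∀ y, x < y → g y = c) (hd : ∀ y, 0 < y → y < x → g y = d) :
    ∫ y in Ioi 0, g y * freund a1 b1 a2 b2 x y =
      c * a1 * exp (-(a1 + a2) * x) +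
        d * a2 * b1 * (exp (-b1 * x) * ∫ y in Ioo 0 x, exp ((b1 - (a1 + a2)) * y)) := by
  have hupper : EqOn (fun y => g y * freund a1 b1 a2 b2 x y)
      (fun y => c * a1 * b2 * exp (-(a1 + a2 - b2) * x) * exp (-b2 * y)) (Ioi x) := by
    intro y hy
    simp only [hc y hy, freund_of_lt hx hy, mul_assoc, ← exp_add]
    ring_nf
  have hlower : EqOn (fun y => g y * freund a1 b1 a2 b2 x y)
      (fun y => d * a2 * b1 * exp (-b1 * x) * exp ((b1 - (a1 + a2)) * y)) (Ioo 0 x) := by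
    intro y ⟨hy, hyx⟩
    simp only [hd y hy hyx, freund_of_gt hy hyx, mul_assoc, ← exp_add]
    ring_nf
  have hb2' : -b2 < 0 := neg_lt_zero.2 hb2
  have hint_upper : IntegrableOn (fun y => g y * freund a1 b1 a2 b2 x y) (Ioi x) :=
    IntegrableOn.congr_fun ((integrableOn_exp_mul_Ioi hb2' x).const_mul _) hupper.symm
      measurableSet_Ioi
  have hint_lower : IntegrableOn (fun y => g y * freund a1 b1 a2 b2 x y) (Ioc 0 x) := by
    rw [integrableOn_Ioc_iff_integrableOn_Ioo]
    refine IntegrableOn.congr_fun ?_ hlower.symm measurableSet_Ioo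
    exact (Continuous.integrableOn_Icc (by fun_prop)).mono_set Ioo_subset_Icc_self
  rw [← Ioc_union_Ioi_eq_Ioi hx.le, setIntegral_union Ioc_disjoint_Ioi_same measurableSet_Ioi
      hint_lower hint_upper, integral_Ioc_eq_integral_Ioo,
    setIntegral_congr_fun measurableSet_Ioo hlower, setIntegral_congr_fun measurableSet_Ioi hupper,
    integral_const_mul, integral_const_mul, integral_exp_mul_Ioi hb2']
  have hexp : exp (-(a1 + a2 - b2) * x) * exp (-b2 * x) = exp (-(a1 + a2) * x) := by
    rw [← exp_add]; ring_nf
  rw [← hexp]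
  field_simp
  ring

lemma integral_integral_mul_freund {a1 b1 a2 b2 : ℝ} (hS : 0 < a1 + a2) (hb1 : 0 < b1)
    (hb2 : 0 < b2) {g : ℝ → ℝ → ℝ} {c d : ℝ} (hc : ∀ x y, 0 < x → x < y → g x y = c)
    (hd : ∀ x y, 0 < y → y < x → g x y = d) :
    ∫ x in Ioi 0, ∫ y in Ioi 0, g x y * freund a1 b1 a2 b2 x y = (c * a1 + d * a2) / (a1 + a2) := by
  have hconv := integral_exp_mul_integral_exp hb1 (show b1 - (a1 + a2) < b1 by linarith)
  rw [sub_sub_cancel] at hconv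
  have hS' : -(a1 + a2) < 0 := neg_lt_zero.2 hS
  rw [setIntegral_congr_fun measurableSet_Ioi fun x hx =>
      integral_mul_freund_of_pos hb2 hx (hc x · hx) (hd x),
    integral_add ((integrableOn_exp_mul_Ioi hS' 0).const_mul _)
      ((Integrable.of_integral_ne_zero (by rw [hconv]; positivity)).const_mul _),
    integral_const_mul, integral_const_mul, integral_exp_mul_Ioi hS', hconv, mul_zero, exp_zero]
  field_simp

theorem freund_fisher_metric (p : Fin 4 → ℝ) (hp : ∀ i, 0 < p i) :
    ∀ i j : Fin 4, fisher p i j =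
      Matrix.diagonal
        ![1 / ((p 0) ^ 2 + p 0 * p 2),
          p 2 / ((p 1) ^ 2 * (p 0 + p 2)),
          1 / ((p 2) ^ 2 + p 0 * p 2),
          p 0 / ((p 3) ^ 2 * (p 0 + p 2))] i j := by
  intro i j
  rw [fisher, integral_integral_mul_freund (add_pos (hp 0) (hp 2)) (hp 1) (hp 3)
    (fun x y hx hxy => pd_pd_ll_of_lt hx hxy hp i j)
    (fun x y hy hyx => pd_pd_ll_of_gt hy hyx hp i j)]
  fin_cases i <;> fin_cases j <;> simp
  all_goals field_simp
  ring
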